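/- Let V be a finite-dimensional real inner product space, L : V → V a symmetric linear map, Δt > 0, b ∈ V, and B = (I + (Δt/2) L²)⁻¹. Suppose u₀, u₁, q₀, q₁ ∈ V and r₀, r₁ ∈ ℝ satisfy the second-order SAV-DG step: (u₁ − u₀)/Δt = −L ((q₀ + q₁)/2) − ((r₀ + r₁)/2) b, q₀ = L u₀, q₁ = L u₁, and (r₁ − r₀)/Δt = (1/2) ⟪b, (u₁ − u₀)/Δt⟫. Set ξ = u₀ − (Δt/2) r₀ b + (Δt/4) ⟪b, u₀⟫ b. Then (r₀ + r₁)/2 = r₀ − (1/2)⟪b, u₀⟫ + (1/2) R, where R = ⟪b, B ξ⟫ / (1 + (Δt/4) ⟪b, B b⟫). -/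

import Mathlib

/-!
With `A = I + (Δt/2) L²` and `s = (r₀ + r₁)/2`, multiplying the `u`-equation by `Δt` gives
`A u₁ = 2 u₀ - A u₀ - Δt s b`, so `u₁ = 2 B u₀ - u₀ - Δt s B b`. Substituting this into the
`r`-equation leaves the scalar equation `s (1 + (Δt/4)⟪b, B b⟫) = r₀ - ½⟪b, u₀⟫ + ½⟪b, B u₀⟫`.
Its coefficient is positive: `L²` is positive since `L` is symmetric, hence so is `A`, and
`⟪b, B b⟫ = ⟪A (B b), B b⟫ ≥ 0`.
-/

open RealInnerProductSpace

section

variable {R M : Type*} [Semiring R] [AddCommGroup M] [Module R M]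

theorem LinearMap.eq_resolvent_of_midpoint_step {K B : M →ₗ[R] M}
    (hB : B ∘ₗ (LinearMap.id + K) = LinearMap.id) {u₀ u₁ f : M}
    (h : u₁ - u₀ = -K (u₀ + u₁) + f) : u₁ = (2 : R) • B u₀ - u₀ + B f := by
  have hinv (v : M) : B (v + K v) = v := LinearMap.congr_fun hB v
  have hstep : u₁ + K u₁ = (2 : R) • u₀ - (u₀ + K u₀) + f := by
    rw [map_add] at h
    rw [two_smul]
    linear_combination (norm := abel) h
  simpa only [hinv, map_add, map_sub, map_smul] using congrArg B hstep

end

namespace LinearMap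

open scoped ComplexOrder

variable {𝕜 E : Type*} [RCLike 𝕜] [NormedAddCommGroup E] [InnerProductSpace 𝕜 E]

theorem IsSymmetric.isPositive_comp_self {T : E →ₗ[𝕜] E} (hT : T.IsSymmetric) :
    (T ∘ₗ T).IsPositive := by
  refine ⟨fun x y => ?_, fun x => ?_⟩
  · simp only [comp_apply, hT _ y, hT x]
  · simpa only [comp_apply, hT (T x) x] using inner_self_nonneg (x := T x)

theorem IsPositive.inner_nonneg_of_comp_eq_id {A B : E →ₗ[𝕜] E} (hA : A.IsPositive)
    (hAB : A ∘ₗ B = id) (x : E) : 0 ≤ inner 𝕜 x (B x) := by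
  simpa only [← comp_apply, hAB, id_apply] using hA.inner_nonneg_left (B x)

end LinearMap

theorem sav_dg_second_order_pre_evaluation_general
    {V : Type*} [NormedAddCommGroup V] [InnerProductSpace ℝ V]
    (L : V →ₗ[ℝ] V) (hL : ∀ v w : V, ⟪L v, w⟫ = ⟪v, L w⟫)
    (Δt : ℝ) (hΔt : 0 < Δt) (b : V)
    (B : V →ₗ[ℝ] V)
    (hB1 : B ∘ₗ (LinearMap.id + (Δt / 2) • (L ∘ₗ L)) = LinearMap.id)
    (hB2 : (LinearMap.id + (Δt / 2) • (L ∘ₗ L)) ∘ₗ B = LinearMap.id)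
    (u₀ u₁ q₀ q₁ : V) (r₀ r₁ : ℝ)
    (h1 : (1 / Δt) • (u₁ - u₀) = -(L ((1 / 2 : ℝ) • (q₀ + q₁))) - ((r₀ + r₁) / 2) • b)
    (h2 : q₀ = L u₀)
    (h3 : q₁ = L u₁)
    (h4 : (r₁ - r₀) / Δt = (1 / 2) * ⟪b, (1 / Δt) • (u₁ - u₀)⟫)
    (ξ : V) (hξ : ξ = u₀ - ((Δt / 2) * r₀) • b + ((Δt / 4) * ⟪b, u₀⟫) • b) :
    (r₀ + r₁) / 2 = r₀ - (1 / 2) * ⟪b, u₀⟫ +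
      (1 / 2) * (⟪b, B ξ⟫ / (1 + (Δt / 4) * ⟪b, B b⟫)) := by
  subst h2 h3 hξ
  have hstep : u₁ - u₀ = -((Δt / 2) • (L ∘ₗ L)) (u₀ + u₁) + (-(Δt * ((r₀ + r₁) / 2))) • b := by
    have := congrArg (Δt • ·) h1
    simp only [smul_smul, mul_one_div_cancel hΔt.ne', one_smul] at this
    rw [this]
    simp only [LinearMap.smul_apply, LinearMap.comp_apply, map_add, map_smul]
    module
  have hu₁ := LinearMap.eq_resolvent_of_midpoint_step hB1 hstep
  have hA : (LinearMap.id + (Δt / 2) • (L ∘ₗ L)).IsPositive :=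
    LinearMap.isPositive_id.add
      ((LinearMap.IsSymmetric.isPositive_comp_self hL).smul_of_nonneg (by positivity))
  have hβ : 0 ≤ ⟪b, B b⟫ := hA.inner_nonneg_of_comp_eq_id hB2 b
  have hr : r₁ - r₀ = (1 / 2) * ⟪b, u₁ - u₀⟫ := by
    rw [real_inner_smul_right] at h4
    field_simp at h4
    linarith
  rw [hu₁] at hr
  simp only [map_add, map_sub, map_smul, inner_add_right, inner_sub_right,
    real_inner_smul_right] at hr ⊢
  have hD : 0 < 1 + Δt / 4 * ⟪b, B b⟫ := by positivity
  field_simp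
  linear_combination 8 * hr

/-- Pre-evaluation formula for the midpoint value of the auxiliary variable in the
second-order SAV-DG scheme: with `B = (I + (Δt/2) L²)⁻¹` and
`ξ = u₀ − (Δt/2) r₀ b + (Δt/4)⟪b, u₀⟫ b`, one has
`(r₀ + r₁)/2 = r₀ − (1/2)⟪b, u₀⟫ + (1/2) R` where
`R = ⟪b, B ξ⟫ / (1 + (Δt/4)⟪b, B b⟫)`. -/
theorem sav_dg_second_order_pre_evaluation
    {V : Type*} [NormedAddCommGroup V] [InnerProductSpace ℝ V] [FiniteDimensional ℝ V]
    (L : V →ₗ[ℝ] V) (hL : ∀ v w : V, ⟪L v, w⟫ = ⟪v, L w⟫)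
    (Δt : ℝ) (hΔt : 0 < Δt) (b : V)
    (B : V →ₗ[ℝ] V)
    (hB1 : B ∘ₗ (LinearMap.id + (Δt / 2) • (L ∘ₗ L)) = LinearMap.id)
    (hB2 : (LinearMap.id + (Δt / 2) • (L ∘ₗ L)) ∘ₗ B = LinearMap.id)
    (u₀ u₁ q₀ q₁ : V) (r₀ r₁ : ℝ)
    (h1 : (1 / Δt) • (u₁ - u₀) = -(L ((1 / 2 : ℝ) • (q₀ + q₁))) - ((r₀ + r₁) / 2) • b)
    (h2 : q₀ = L u₀)
    (h3 : q₁ = L u₁)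
    (h4 : (r₁ - r₀) / Δt = (1 / 2) * ⟪b, (1 / Δt) • (u₁ - u₀)⟫)
    (ξ : V) (hξ : ξ = u₀ - ((Δt / 2) * r₀) • b + ((Δt / 4) * ⟪b, u₀⟫) • b) :
    (r₀ + r₁) / 2 = r₀ - (1 / 2) * ⟪b, u₀⟫ +
      (1 / 2) * (⟪b, B ξ⟫ / (1 + (Δt / 4) * ⟪b, B b⟫)) :=
  sav_dg_second_order_pre_evaluation_general L hL Δt hΔt b B hB1 hB2 u₀ u₁ q₀ q₁ r₀ r₁ h1 h2 h3 h4 ξ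
    hξ
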